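/- arXiv:1810.13100 — 8 statements merged into one kernel-verified Lean document; each statement's English description precedes it below -/
import Mathlib

section
/- Under assumptions: g convex real-valued, M symmetric with M − αAᵀA positive semidefinite, and existence of a primal solution x⋆ together with a dual certificate u⋆ for x⋆ — for any initialization (x⁰, u⁰) ∈ ℝⁿ × ℝᵐ, the NCS iterates converge: there exist a primal solution x̄ and a dual certificate ū for x̄ such that x^k → x̄ and u^k → ū as k → ∞. -/
open Matrix Filter Topology

-- Moore–Penrose pseudoinverse, characterized by the four Penrose conditions
-- (which determine it uniquely when a solution exists).
open Classical in
noncomputable def mpInv {k l : ℕ} (A : Matrix (Fin k) (Fin l) ℝ) : Matrix (Fin l) (Fin k) ℝ :=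
  if h : ∃ X : Matrix (Fin l) (Fin k) ℝ,
      A * X * A = A ∧ X * A * X = X ∧ (A * X)ᵀ = A * X ∧ (X * A)ᵀ = X * A
  then h.choose else 0

/-- `ProxRel g α z u'` says that `u' = prox_{αg*}(z)`, i.e. that
`α⁻¹ (z - u')` is a minimizer of `x ↦ g(x) + (α/2)‖x - z/α‖²`
(by Moreau's identity `prox_{αg*}(z) = z - α argmin_x {g(x) + (α/2)‖x - z/α‖²}`). -/
def ProxRel {m : ℕ} (g : (Fin m → ℝ) → ℝ) (α : ℝ) (z u' : Fin m → ℝ) : Prop :=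
  IsMinOn (fun y : Fin m → ℝ => g y + (α / 2) * ((y - α⁻¹ • z) ⬝ᵥ (y - α⁻¹ • z)))
    Set.univ (α⁻¹ • (z - u'))

/-!
NCS is a degenerate preconditioned proximal-point method for the saddle-point problem
`min_x max_u ⟨u, A x - b⟩ - g*(u)`. For `z = (x, u)` let `‖·‖_H` be the seminorm of
`H = [[M, -Aᵀ], [-A, α⁻¹]]`, which is positive semidefinite because `M ⪰ α AᵀA`. A step
`z₀ ↦ z₁` reads `H (z₀ - z₁) = (Aᵀ u₁, v - (A x₁ - b))` with `u₁ ∈ ∂g(v)`, so monotonicity of `∂g`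
gives, for any two steps, `‖z₁ - z₁'‖²_H + ‖(z₀ - z₁) - (z₀' - z₁')‖²_H ≤ ‖z₀ - z₀'‖²_H`.
Realise `‖·‖_H` as the norm of a linear embedding into a Euclidean space. Comparing the iterates
with the saddle point `(x⋆, u⋆)`, a step from itself to itself, shows that the embedded iterates
are bounded with vanishing increments; comparing them with their own shifts shows that the shift is
nonexpansive. In finite dimension this forces the embedded iterates to converge. The iterates
themselves follow, since `x - M⁺ M x` is invariant and `M x - Aᵀ u`, `u - α A x` are read off the
embedding. The limit is a saddle point because `Aᵀ u_k = M (x_k - x_{k+1}) → 0` and subgradient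
inequalities pass to the limit.
-/

theorem exists_tendsto_of_fejer_of_nonexpansive {X : Type*} [MetricSpace X] [ProperSpace X]
    {y : ℕ → X} {c : X}
    (hfejer : ∀ k, dist (y (k + 1)) c ^ 2 + dist (y k) (y (k + 1)) ^ 2 ≤ dist (y k) c ^ 2)
    (hshift : ∀ k j, dist (y (k + 1)) (y (j + 1)) ≤ dist (y k) (y j)) :
    ∃ a, Tendsto y atTop (𝓝 a) := by
  have hanti : Antitone fun k => dist (y k) c ^ 2 :=
    antitone_nat_of_succ_le fun k => by nlinarith [hfejer k]
  have hlim := tendsto_atTop_ciInf hanti ⟨0, Set.forall_mem_range.2 fun _ => sq_nonneg _⟩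
  have hstep : Tendsto (fun k => dist (y k) (y (k + 1))) atTop (𝓝 0) := by
    have hsq : Tendsto (fun k => dist (y k) (y (k + 1)) ^ 2) atTop (𝓝 0) := by
      refine squeeze_zero (fun k => sq_nonneg _) (fun k => ?_)
        (by simpa using hlim.sub ((tendsto_add_atTop_iff_nat 1).2 hlim))
      linarith [hfejer k]
    simpa [Function.comp_def] using (Real.continuous_sqrt.tendsto 0).comp hsq
  have hbdd (k : ℕ) : y k ∈ Metric.closedBall c (dist (y 0) c) :=
    (pow_le_pow_iff_left₀ dist_nonneg dist_nonneg two_ne_zero).1 (hanti (Nat.zero_le k))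
  obtain ⟨a, -, φ, hφ, hya⟩ := tendsto_subseq_of_bounded Metric.isBounded_closedBall hbdd
  have hya' : Tendsto (fun j => y (φ j + 1)) atTop (𝓝 a) :=
    hya.congr_dist (hstep.comp hφ.tendsto_atTop)
  -- the shift is nonexpansive, so the distance to the cluster point `a` is antitone
  have hanti' : Antitone fun k => dist (y k) a := antitone_nat_of_succ_le fun k =>
    le_of_tendsto_of_tendsto' (tendsto_const_nhds.dist hya') (tendsto_const_nhds.dist hya)
      fun j => hshift k (φ j)
  have hlim' := tendsto_atTop_ciInf hanti' ⟨0, Set.forall_mem_range.2 fun _ => dist_nonneg⟩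
  have h0 : Tendsto (fun j => dist (y (φ j)) a) atTop (𝓝 0) := tendsto_iff_dist_tendsto_zero.1 hya
  refine ⟨a, tendsto_iff_dist_tendsto_zero.2 ?_⟩
  rwa [tendsto_nhds_unique (hlim'.comp hφ.tendsto_atTop) h0] at hlim'

section Subgradient

variable {ι : Type*} [Fintype ι]

def HasSubgradient (g : (ι → ℝ) → ℝ) (v s : ι → ℝ) : Prop :=
  ∀ y, g v + s ⬝ᵥ (y - v) ≤ g y

lemma HasSubgradient.dotProduct_sub_nonneg {g : (ι → ℝ) → ℝ} {v v' s s' : ι → ℝ}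
    (h : HasSubgradient g v s) (h' : HasSubgradient g v' s') : 0 ≤ (s - s') ⬝ᵥ (v - v') := by
  have h₁ := h v'
  have h₂ := h' v
  rw [← neg_sub v v', dotProduct_neg] at h₁
  rw [sub_dotProduct]
  linarith

lemma HasSubgradient.of_tendsto {β : Type*} {l : Filter β} [l.NeBot] {g : (ι → ℝ) → ℝ}
    (hg : Continuous g) {v s : β → ι → ℝ} {v₀ s₀ : ι → ℝ} (hv : Tendsto v l (𝓝 v₀))
    (hs : Tendsto s l (𝓝 s₀)) (h : ∀ᶠ k in l, HasSubgradient g (v k) (s k)) :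
    HasSubgradient g v₀ s₀ := fun y =>
  le_of_tendsto (((hg.tendsto v₀).comp hv).add <|
      ((continuous_fst.dotProduct continuous_snd).tendsto _).comp
        (hs.prodMk_nhds (tendsto_const_nhds.sub hv)))
    (h.mono fun _ hk => hk y)

lemma hasSubgradient_of_isMinOn {g : (ι → ℝ) → ℝ} (hg : ConvexOn ℝ Set.univ g) {α : ℝ}
    {c v : ι → ℝ} (h : IsMinOn (fun y => g y + (α / 2) * ((y - c) ⬝ᵥ (y - c))) Set.univ v) :
    HasSubgradient g v (α • (c - v)) := by
  intro y
  set d := y - v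
  -- compare `v` with the points `v + t d` of the segment towards `y` and let `t → 0⁺`
  have key : ∀ t ∈ Set.Ioc (0 : ℝ) 1,
      g v + (α • (c - v)) ⬝ᵥ d ≤ g y + t * (α / 2 * (d ⬝ᵥ d)) := by
    rintro t ⟨ht₀, ht₁⟩
    have hmin := isMinOn_iff.1 h (v + t • d) trivial
    have hconv := hg.2 (Set.mem_univ v) (Set.mem_univ y) (sub_nonneg.2 ht₁) ht₀.le
      (sub_add_cancel 1 t)
    have hseg : (1 - t) • v + t • y = v + t • d := by module
    have hexp : (v + t • d - c) ⬝ᵥ (v + t • d - c)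
        = (v - c) ⬝ᵥ (v - c) - 2 * t * ((c - v) ⬝ᵥ d) + t ^ 2 * (d ⬝ᵥ d) := by
      rw [show v + t • d - c = -(c - v) + t • d by module, ← neg_sub c v]
      simp only [add_dotProduct, dotProduct_add, neg_dotProduct, dotProduct_neg, smul_dotProduct,
        dotProduct_smul, smul_eq_mul, dotProduct_comm d (c - v)]
      ring
    rw [hseg, smul_eq_mul, smul_eq_mul] at hconv
    simp only [hexp] at hmin
    rw [smul_dotProduct, smul_eq_mul]
    nlinarith
  have hlim : Tendsto (fun t : ℝ => g y + t * (α / 2 * (d ⬝ᵥ d))) (𝓝 0) (𝓝 (g y)) := by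
    simpa using ((tendsto_id (x := 𝓝 (0 : ℝ))).mul_const (α / 2 * (d ⬝ᵥ d))).const_add (g y)
  exact ge_of_tendsto (hlim.mono_left nhdsWithin_le_nhds)
    (eventually_of_mem (Ioc_mem_nhdsGT zero_lt_one) key)

end Subgradient

lemma ProxRel.hasSubgradient {m : ℕ} {g : (Fin m → ℝ) → ℝ} (hg : ConvexOn ℝ Set.univ g) {α : ℝ}
    (hα : α ≠ 0) {z u' : Fin m → ℝ} (h : ProxRel g α z u') :
    HasSubgradient g (α⁻¹ • (z - u')) u' := by
  simpa only [← smul_sub, sub_sub_cancel, smul_smul, mul_inv_cancel₀ hα, one_smul]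
    using hasSubgradient_of_isMinOn hg h

section Matrix

variable {ι κ : Type*} [Fintype ι] [Fintype κ]

open scoped MatrixOrder in
lemma Matrix.PosSemidef.exists_transpose_mul_self_eq [DecidableEq ι] {S : Matrix ι ι ℝ}
    (hS : S.PosSemidef) : ∃ R : Matrix ι ι ℝ, Rᵀ * R = S := by
  obtain ⟨R, hR⟩ := CStarAlgebra.nonneg_iff_eq_star_mul_self.mp hS.nonneg
  exact ⟨R, by rw [hR, star_eq_conjTranspose, conjTranspose_eq_transpose_of_trivial]⟩

lemma mulVec_eq_zero_of_posSemidef_sub {M : Matrix ι ι ℝ} {A : Matrix κ ι ℝ} {α : ℝ}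
    (hα : 0 < α) (hMA : (M - α • (Aᵀ * A)).PosSemidef) {w : ι → ℝ} (hw : M *ᵥ w = 0) :
    A *ᵥ w = 0 := by
  have h := hMA.dotProduct_mulVec_nonneg w
  rw [sub_mulVec, smul_mulVec, ← mulVec_mulVec, hw, zero_sub, dotProduct_neg, dotProduct_smul,
    star_trivial, dotProduct_transpose_mulVec, smul_eq_mul, neg_nonneg] at h
  exact dotProduct_self_eq_zero.1 <| le_antisymm
    (nonpos_of_mul_nonpos_right h hα) (by simpa using dotProduct_self_star_nonneg (A *ᵥ w))

lemma exists_penrose_of_transpose_eq [DecidableEq ι] (M : Matrix ι ι ℝ) (hM : Mᵀ = M) :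
    ∃ X : Matrix ι ι ℝ,
      M * X * M = M ∧ X * M * X = X ∧ (M * X)ᵀ = M * X ∧ (X * M)ᵀ = X * M := by
  have hsa {N : Matrix ι ι ℝ} : IsSelfAdjoint N ↔ Nᵀ = N := by
    rw [IsSelfAdjoint, star_eq_conjTranspose, conjTranspose_eq_transpose_of_trivial]
  have hcont (f : ℝ → ℝ) : ContinuousOn f (spectrum ℝ M) := M.finite_real_spectrum.continuousOn _
  have hmul (f g : ℝ → ℝ) : cfc f M * cfc g M = cfc (fun t => f t * g t) M :=
    (cfc_mul f g M (hcont f) (hcont g)).symm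
  have hid : cfc (fun t : ℝ => t) M = M := cfc_id' ℝ M (hsa.2 hM)
  have hMX : M * cfc (fun t : ℝ => t⁻¹) M = cfc (fun t : ℝ => t * t⁻¹) M := by
    simpa only [hid] using hmul (fun t => t) (fun t : ℝ => t⁻¹)
  have hXM : cfc (fun t : ℝ => t⁻¹) M * M = cfc (fun t : ℝ => t⁻¹ * t) M := by
    simpa only [hid] using hmul (fun t : ℝ => t⁻¹) (fun t => t)
  -- invert the nonzero eigenvalues of `M`; the zero ones stay zero since `0⁻¹ = 0`
  refine ⟨cfc (fun t : ℝ => t⁻¹) M, ?_, ?_, by rw [hMX, hsa.1 (cfc_predicate _ M)],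
    by rw [hXM, hsa.1 (cfc_predicate _ M)]⟩
  · simpa only [hid, hMX, mul_inv_mul_cancel] using hmul (fun t => t * t⁻¹) (fun t => t)
  · have h (t : ℝ) : t⁻¹ * t * t⁻¹ = t⁻¹ := by simpa using mul_inv_mul_cancel t⁻¹
    simpa only [hXM, h] using hmul (fun t => t⁻¹ * t) (fun t : ℝ => t⁻¹)

end Matrix

section Pseudoinverse

variable {m n : ℕ} {M : Matrix (Fin n) (Fin n) ℝ}

lemma mpInv_spec (hM : Mᵀ = M) :
    M * mpInv M * M = M ∧ mpInv M * M * mpInv M = mpInv M ∧ (M * mpInv M)ᵀ = M * mpInv M := by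
  have h := exists_penrose_of_transpose_eq M hM
  rw [mpInv, dif_pos h]
  exact ⟨h.choose_spec.1, h.choose_spec.2.1, h.choose_spec.2.2.1⟩

/-- `M M⁺` is the orthogonal projection onto the range of `M`, which contains that of `Aᵀ`. -/
lemma mul_mpInv_mul_transpose {A : Matrix (Fin m) (Fin n) ℝ} (hM : Mᵀ = M)
    (hker : ∀ w, M *ᵥ w = 0 → A *ᵥ w = 0) : M * mpInv M * Aᵀ = Aᵀ := by
  obtain ⟨h₁, -, h₃⟩ := mpInv_spec hM
  have hMMX : M * (M * mpInv M) = M :=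
    calc M * (M * mpInv M) = Mᵀ * (M * mpInv M)ᵀ := by rw [hM, h₃]
      _ = M := by rw [← transpose_mul, h₁, hM]
  have hAMX : A * (M * mpInv M) = A := by
    refine ext_iff_mulVec.2 fun v => ?_
    have := hker (v - (M * mpInv M) *ᵥ v) (by rw [mulVec_sub, mulVec_mulVec, hMMX, sub_self])
    rwa [mulVec_sub, sub_eq_zero, mulVec_mulVec, eq_comm] at this
  rw [← h₃, ← transpose_mul, hAMX]

end Pseudoinverse

section NCS

variable {ι κ : Type*} [Fintype ι]
  (A : Matrix κ ι ℝ) (b : κ → ℝ) (M : Matrix ι ι ℝ) (α : ℝ) (g : (κ → ℝ) → ℝ)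

noncomputable def ncsPoint (x₀ : ι → ℝ) (u₀ : κ → ℝ) (x₁ : ι → ℝ) (u₁ : κ → ℝ) : κ → ℝ :=
  α⁻¹ • (u₀ - u₁) + (A *ᵥ ((2 : ℝ) • x₁ - x₀) - b)

-- With `Rᵀ R = M - α AᵀA`, the norm of `ncsEmbed A α R x u` is the `H`-seminorm of `(x, u)`.
noncomputable def ncsEmbed (R : Matrix ι ι ℝ) (x : ι → ℝ) (u : κ → ℝ) :
    EuclideanSpace ℝ (ι ⊕ κ) :=
  WithLp.toLp 2 (Sum.elim (R *ᵥ x) (√α • (A *ᵥ x - α⁻¹ • u)))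

variable {A b α} {R : Matrix ι ι ℝ}

lemma ncsPoint_self (x : ι → ℝ) (u : κ → ℝ) : ncsPoint A b α x u x u = A *ᵥ x - b := by
  simp [ncsPoint, two_smul]

lemma ncsEmbed_sub (x x' : ι → ℝ) (u u' : κ → ℝ) :
    ncsEmbed A α R x u - ncsEmbed A α R x' u' = ncsEmbed A α R (x - x') (u - u') := by
  ext (i | i) <;>
    simp only [ncsEmbed, PiLp.sub_apply, Sum.elim_inl, Sum.elim_inr, Pi.sub_apply, Pi.smul_apply,
      smul_eq_mul, mulVec_sub]
  ring

lemma eq_smul_mulVec_sub_ncsEmbed (hα : 0 < α) (x : ι → ℝ) (u : κ → ℝ) :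
    u = α • (A *ᵥ x) - √α • fun i => ncsEmbed A α R x u (.inr i) := by
  change _ = _ - √α • (√α • (A *ᵥ x - α⁻¹ • u))
  rw [smul_smul, Real.mul_self_sqrt hα.le, smul_sub, smul_smul, mul_inv_cancel₀ hα.ne', one_smul,
    sub_sub_cancel]

variable (A b α) [Fintype κ]

-- One NCS step `(x₀, u₀) ↦ (x₁, u₁)`, with the pseudoinverse and the prox replaced by the
-- equation and the subgradient inequality that they guarantee.
structure IsNCSStep (x₀ : ι → ℝ) (u₀ : κ → ℝ) (x₁ : ι → ℝ) (u₁ : κ → ℝ) : Prop where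
  primal : M *ᵥ (x₀ - x₁) = Aᵀ *ᵥ u₀
  dual : HasSubgradient g (ncsPoint A b α x₀ u₀ x₁ u₁) u₁

structure IsDualCertificate (x : ι → ℝ) (u : κ → ℝ) : Prop where
  transpose_mulVec_eq_zero : Aᵀ *ᵥ u = 0
  hasSubgradient : HasSubgradient g (A *ᵥ x - b) u

variable {A b M α g}

lemma IsDualCertificate.le {x : ι → ℝ} {u : κ → ℝ} (h : IsDualCertificate A b g x u)
    (y : ι → ℝ) : g (A *ᵥ x - b) ≤ g (A *ᵥ y - b) := by
  have := h.hasSubgradient (A *ᵥ y - b)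
  rwa [sub_sub_sub_cancel_right, ← mulVec_sub, ← dotProduct_transpose_mulVec,
    h.transpose_mulVec_eq_zero, dotProduct_zero, add_zero] at this

lemma IsDualCertificate.isNCSStep {x : ι → ℝ} {u : κ → ℝ} (h : IsDualCertificate A b g x u) :
    IsNCSStep A b M α g x u x u where
  primal := by rw [sub_self, mulVec_zero, h.transpose_mulVec_eq_zero]
  dual := by rw [ncsPoint_self]; exact h.hasSubgradient

lemma inner_ncsEmbed (hα : 0 < α) (hR : Rᵀ * R = M - α • (Aᵀ * A)) (x x' : ι → ℝ)
    (u u' : κ → ℝ) :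
    inner ℝ (ncsEmbed A α R x u) (ncsEmbed A α R x' u')
      = x ⬝ᵥ (M *ᵥ x') - (A *ᵥ x) ⬝ᵥ u' - u ⬝ᵥ (A *ᵥ x') + α⁻¹ * (u ⬝ᵥ u') := by
  have hRx : (R *ᵥ x) ⬝ᵥ (R *ᵥ x') = x ⬝ᵥ (M *ᵥ x') - α * ((A *ᵥ x) ⬝ᵥ (A *ᵥ x')) := by
    rw [dotProduct_comm, ← dotProduct_transpose_mulVec, mulVec_mulVec, hR, sub_mulVec, smul_mulVec,
      ← mulVec_mulVec, dotProduct_sub, dotProduct_smul, smul_eq_mul, dotProduct_transpose_mulVec,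
      dotProduct_comm (A *ᵥ x')]
  rw [real_inner_comm, ncsEmbed, ncsEmbed, EuclideanSpace.inner_toLp_toLp, star_trivial,
    sumElim_dotProduct_sumElim, hRx]
  simp only [dotProduct_smul, smul_dotProduct, dotProduct_sub, sub_dotProduct, smul_eq_mul]
  field_simp
  rw [Real.sq_sqrt hα.le]
  ring

lemma IsNCSStep.inner_ncsEmbed_nonneg (hα : 0 < α) (hR : Rᵀ * R = M - α • (Aᵀ * A))
    {x₀ x₁ x₀' x₁' : ι → ℝ} {u₀ u₁ u₀' u₁' : κ → ℝ}
    (h : IsNCSStep A b M α g x₀ u₀ x₁ u₁) (h' : IsNCSStep A b M α g x₀' u₀' x₁' u₁') :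
    0 ≤ inner ℝ (ncsEmbed A α R (x₁ - x₁') (u₁ - u₁'))
      (ncsEmbed A α R (x₀ - x₁ - (x₀' - x₁')) (u₀ - u₁ - (u₀' - u₁'))) := by
  have hMΔ : M *ᵥ (x₀ - x₁ - (x₀' - x₁')) = Aᵀ *ᵥ (u₀ - u₀') := by
    rw [mulVec_sub, h.primal, h'.primal, mulVec_sub]
  -- `H` maps the difference of the two increments to `(Aᵀ (u₁ - u₁'), v - v' - A (x₁ - x₁'))`
  have hpair : inner ℝ (ncsEmbed A α R (x₁ - x₁') (u₁ - u₁'))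
      (ncsEmbed A α R (x₀ - x₁ - (x₀' - x₁')) (u₀ - u₁ - (u₀' - u₁')))
      = (u₁ - u₁') ⬝ᵥ (ncsPoint A b α x₀ u₀ x₁ u₁ - ncsPoint A b α x₀' u₀' x₁' u₁') := by
    rw [inner_ncsEmbed hα hR, hMΔ, dotProduct_transpose_mulVec, dotProduct_comm (A *ᵥ _),
      ← sub_dotProduct, show u₀ - u₀' - (u₀ - u₁ - (u₀' - u₁')) = u₁ - u₁' by abel,
      ← dotProduct_sub, ← smul_eq_mul, ← dotProduct_smul, ← dotProduct_add]
    congr 1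
    simp only [ncsPoint, mulVec_sub, mulVec_smul, smul_sub]
    module
  rw [hpair]
  exact h.dual.dotProduct_sub_nonneg h'.dual

lemma IsNCSStep.dist_ncsEmbed_sq_add_le (hα : 0 < α) (hR : Rᵀ * R = M - α • (Aᵀ * A))
    {x₀ x₁ x₀' x₁' : ι → ℝ} {u₀ u₁ u₀' u₁' : κ → ℝ}
    (h : IsNCSStep A b M α g x₀ u₀ x₁ u₁) (h' : IsNCSStep A b M α g x₀' u₀' x₁' u₁') :
    dist (ncsEmbed A α R x₁ u₁) (ncsEmbed A α R x₁' u₁') ^ 2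
      + dist (ncsEmbed A α R x₀ u₀ - ncsEmbed A α R x₁ u₁)
          (ncsEmbed A α R x₀' u₀' - ncsEmbed A α R x₁' u₁') ^ 2
      ≤ dist (ncsEmbed A α R x₀ u₀) (ncsEmbed A α R x₀' u₀') ^ 2 := by
  have hsplit : ncsEmbed A α R x₀ u₀ - ncsEmbed A α R x₀' u₀'
      = ncsEmbed A α R (x₁ - x₁') (u₁ - u₁')
        + ncsEmbed A α R (x₀ - x₁ - (x₀' - x₁')) (u₀ - u₁ - (u₀' - u₁')) := by
    simp only [← ncsEmbed_sub]
    abel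
  simp only [dist_eq_norm, hsplit, ncsEmbed_sub, norm_add_sq_real]
  linarith [h.inner_ncsEmbed_nonneg hα hR h']

lemma IsNCSStep.dist_ncsEmbed_le (hα : 0 < α) (hR : Rᵀ * R = M - α • (Aᵀ * A))
    {x₀ x₁ x₀' x₁' : ι → ℝ} {u₀ u₁ u₀' u₁' : κ → ℝ}
    (h : IsNCSStep A b M α g x₀ u₀ x₁ u₁) (h' : IsNCSStep A b M α g x₀' u₀' x₁' u₁') :
    dist (ncsEmbed A α R x₁ u₁) (ncsEmbed A α R x₁' u₁')
      ≤ dist (ncsEmbed A α R x₀ u₀) (ncsEmbed A α R x₀' u₀') :=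
  (pow_le_pow_iff_left₀ dist_nonneg dist_nonneg two_ne_zero).1 <|
    le_of_add_le_of_nonneg_left (h.dist_ncsEmbed_sq_add_le hα hR h') (sq_nonneg _)

lemma mulVec_sub_transpose_mulVec_eq_ncsEmbed (hα : 0 < α) (hR : Rᵀ * R = M - α • (Aᵀ * A))
    (x : ι → ℝ) (u : κ → ℝ) :
    M *ᵥ x - Aᵀ *ᵥ u = Rᵀ *ᵥ (fun i => ncsEmbed A α R x u (.inl i))
      + √α • (Aᵀ *ᵥ fun i => ncsEmbed A α R x u (.inr i)) := by
  change _ = Rᵀ *ᵥ (R *ᵥ x) + √α • (Aᵀ *ᵥ (√α • (A *ᵥ x - α⁻¹ • u)))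
  rw [mulVec_mulVec, hR, mulVec_smul, smul_smul, Real.mul_self_sqrt hα.le, mulVec_sub, mulVec_smul,
    smul_sub, smul_smul, mul_inv_cancel₀ hα.ne', one_smul, sub_mulVec, smul_mulVec, mulVec_mulVec]
  abel

lemma exists_tendsto_of_tendsto_ncsEmbed (hα : 0 < α) (hR : Rᵀ * R = M - α • (Aᵀ * A))
    {X : Matrix ι ι ℝ} (hX : X * M * X = X) {x : ℕ → ι → ℝ} {u : ℕ → κ → ℝ}
    (hx : ∀ k, x (k + 1) = x k - X *ᵥ (Aᵀ *ᵥ u k)) {ζ : EuclideanSpace ℝ (ι ⊕ κ)}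
    (hζ : Tendsto (fun k => ncsEmbed A α R (x k) (u k)) atTop (𝓝 ζ)) :
    ∃ xb ub, Tendsto x atTop (𝓝 xb) ∧ Tendsto u atTop (𝓝 ub) := by
  -- `X M` fixes the range of `X`, so `x k - X M x k` is invariant
  have hinv (k : ℕ) : x k - X *ᵥ (M *ᵥ x k) = x 0 - X *ᵥ (M *ᵥ x 0) := by
    induction k with
    | zero => rfl
    | succ k ih =>
      have hXMX : X *ᵥ (M *ᵥ (X *ᵥ (Aᵀ *ᵥ u k))) = X *ᵥ (Aᵀ *ᵥ u k) := by
        rw [mulVec_mulVec, mulVec_mulVec, hX]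
      rw [← ih, hx k, mulVec_sub M, mulVec_sub X, hXMX]
      abel
  set c := x 0 - X *ᵥ (M *ᵥ x 0)
  have hsucc (k : ℕ) : x (k + 1) = c + X *ᵥ (M *ᵥ x k - Aᵀ *ᵥ u k) := by
    rw [hx k, ← hinv k, mulVec_sub X]
    abel
  have hxb : Tendsto (fun k => x (k + 1)) atTop
      (𝓝 (c + X *ᵥ (Rᵀ *ᵥ (fun i => ζ (.inl i)) + √α • (Aᵀ *ᵥ fun i => ζ (.inr i))))) := by
    simp only [hsucc, mulVec_sub_transpose_mulVec_eq_ncsEmbed hα hR]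
    exact ((by fun_prop : Continuous fun ζ : EuclideanSpace ℝ (ι ⊕ κ) =>
      c + X *ᵥ (Rᵀ *ᵥ (fun i => ζ (.inl i)) + √α • (Aᵀ *ᵥ fun i => ζ (.inr i)))).tendsto ζ).comp hζ
  have hx' := (tendsto_add_atTop_iff_nat 1).1 hxb
  have hu' := ((by fun_prop : Continuous fun p : (ι → ℝ) × EuclideanSpace ℝ (ι ⊕ κ) =>
    α • (A *ᵥ p.1) - √α • fun i => p.2 (.inr i)).tendsto _).comp (hx'.prodMk_nhds hζ)
  exact ⟨_, _, hx', hu'.congr fun k => (eq_smul_mulVec_sub_ncsEmbed hα (x k) (u k)).symm⟩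

lemma IsDualCertificate.of_tendsto (hg : Continuous g) {x : ℕ → ι → ℝ} {u : ℕ → κ → ℝ}
    (hstep : ∀ k, IsNCSStep A b M α g (x k) (u k) (x (k + 1)) (u (k + 1)))
    {xb : ι → ℝ} {ub : κ → ℝ} (hx : Tendsto x atTop (𝓝 xb)) (hu : Tendsto u atTop (𝓝 ub)) :
    IsDualCertificate A b g xb ub := by
  have hx₁ := (tendsto_add_atTop_iff_nat 1).2 hx
  have hu₁ := (tendsto_add_atTop_iff_nat 1).2 hu
  constructor
  · have h := ((by fun_prop : Continuous (M *ᵥ ·)).tendsto _).comp (hx.sub hx₁)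
    simp only [Function.comp_def, (hstep _).primal, sub_self, mulVec_zero] at h
    exact tendsto_nhds_unique (((by fun_prop : Continuous (Aᵀ *ᵥ ·)).tendsto _).comp hu) h
  · refine HasSubgradient.of_tendsto hg ?_ hu₁ (Eventually.of_forall fun k => (hstep k).dual)
    rw [← ncsPoint_self (α := α) xb ub]
    exact ((by unfold ncsPoint; fun_prop : Continuous fun p :
      ((ι → ℝ) × (κ → ℝ)) × (ι → ℝ) × (κ → ℝ) =>
        ncsPoint A b α p.1.1 p.1.2 p.2.1 p.2.2).tendsto _).comp
      ((hx.prodMk_nhds hu).prodMk_nhds (hx₁.prodMk_nhds hu₁))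

end NCS

lemma isNCSStep_of_proxRel {m n : ℕ} {A : Matrix (Fin m) (Fin n) ℝ} {b : Fin m → ℝ}
    {M X : Matrix (Fin n) (Fin n) ℝ} {α : ℝ} {g : (Fin m → ℝ) → ℝ} (hg : ConvexOn ℝ Set.univ g)
    (hα : α ≠ 0) (hX : M * X * Aᵀ = Aᵀ) {x₀ x₁ : Fin n → ℝ} {u₀ u₁ : Fin m → ℝ}
    (hx : x₁ = x₀ - X *ᵥ (Aᵀ *ᵥ u₀))
    (hu : ProxRel g α (u₀ + α • (A *ᵥ ((2 : ℝ) • x₁ - x₀) - b)) u₁) :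
    IsNCSStep A b M α g x₀ u₀ x₁ u₁ where
  primal := by rw [hx, sub_sub_cancel, mulVec_mulVec, mulVec_mulVec, hX]
  dual := by
    convert hu.hasSubgradient hg hα using 1
    rw [ncsPoint, add_sub_right_comm, smul_add, smul_smul, inv_mul_cancel₀ hα, one_smul]

theorem ncs_convergence_general
    {m n : ℕ}
    (A : Matrix (Fin m) (Fin n) ℝ) (b : Fin m → ℝ)
    (α : ℝ) (hα : 0 < α)
    (g : (Fin m → ℝ) → ℝ) (hg : ConvexOn ℝ Set.univ g)
    (M : Matrix (Fin n) (Fin n) ℝ) (hMsymm : Mᵀ = M)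
    (hMpsd : (M - α • (Aᵀ * A)).PosSemidef)
    -- NCS iterates from an arbitrary initialization (x 0, u 0):
    (x : ℕ → Fin n → ℝ) (u : ℕ → Fin m → ℝ)
    (hx : ∀ k, x (k + 1) = x k - mpInv M *ᵥ (Aᵀ *ᵥ u k))
    (hu : ∀ k, ProxRel g α
      (u k + α • (A *ᵥ ((2 : ℝ) • x (k + 1) - x k) - b)) (u (k + 1)))
    -- a primal solution x⋆ together with a dual certificate u⋆ exists:
    (xs : Fin n → ℝ) (us : Fin m → ℝ)
    (hus : Aᵀ *ᵥ us = 0)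
    (hsub : ∀ y, g (A *ᵥ xs - b) + us ⬝ᵥ (y - (A *ᵥ xs - b)) ≤ g y) :
    -- the iterates converge to a primal solution and a dual certificate for it:
    ∃ (xb : Fin n → ℝ) (ub : Fin m → ℝ),
      (∀ y, g (A *ᵥ xb - b) ≤ g (A *ᵥ y - b)) ∧
      Aᵀ *ᵥ ub = 0 ∧
      (∀ y, g (A *ᵥ xb - b) + ub ⬝ᵥ (y - (A *ᵥ xb - b)) ≤ g y) ∧
      Tendsto x atTop (𝓝 xb) ∧ Tendsto u atTop (𝓝 ub) := by
  obtain ⟨R, hR⟩ := hMpsd.exists_transpose_mul_self_eq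
  have hrange := mul_mpInv_mul_transpose hMsymm fun _ => mulVec_eq_zero_of_posSemidef_sub hα hMpsd
  have hstep (k : ℕ) : IsNCSStep A b M α g (x k) (u k) (x (k + 1)) (u (k + 1)) :=
    isNCSStep_of_proxRel hg hα.ne' hrange (hx k) (hu k)
  have hfix : IsNCSStep A b M α g xs us xs us := (IsDualCertificate.mk hus hsub).isNCSStep
  obtain ⟨ζ, hζ⟩ := exists_tendsto_of_fejer_of_nonexpansive
    (y := fun k => ncsEmbed A α R (x k) (u k)) (c := ncsEmbed A α R xs us)
    (fun k => by
      simpa only [sub_self, dist_zero_right, ← dist_eq_norm]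
        using (hstep k).dist_ncsEmbed_sq_add_le hα hR hfix)
    (fun k j => (hstep k).dist_ncsEmbed_le hα hR (hstep j))
  obtain ⟨xb, ub, hxb, hub⟩ :=
    exists_tendsto_of_tendsto_ncsEmbed hα hR (mpInv_spec hMsymm).2.1 hx hζ
  have hcert : IsDualCertificate A b g xb ub :=
    .of_tendsto (continuousOn_univ.1 (hg.continuousOn isOpen_univ)) hstep hxb hub
  exact ⟨xb, ub, hcert.le, hcert.transpose_mulVec_eq_zero, hcert.hasSubgradient, hxb, hub⟩

theorem ncs_convergence
    {m n : ℕ}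
    (A : Matrix (Fin m) (Fin n) ℝ) (b : Fin m → ℝ)
    (α : ℝ) (hα : 0 < α)
    (g : (Fin m → ℝ) → ℝ) (hg : ConvexOn ℝ Set.univ g)
    (M : Matrix (Fin n) (Fin n) ℝ) (hMsymm : Mᵀ = M)
    (hMpsd : (M - α • (Aᵀ * A)).PosSemidef)
    -- NCS iterates from an arbitrary initialization (x 0, u 0):
    (x : ℕ → Fin n → ℝ) (u : ℕ → Fin m → ℝ)
    (hx : ∀ k, x (k + 1) = x k - mpInv M *ᵥ (Aᵀ *ᵥ u k))
    (hu : ∀ k, ProxRel g α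
      (u k + α • (A *ᵥ ((2 : ℝ) • x (k + 1) - x k) - b)) (u (k + 1)))
    -- a primal solution x⋆ together with a dual certificate u⋆ exists:
    (xs : Fin n → ℝ) (us : Fin m → ℝ)
    (hxs : ∀ y, g (A *ᵥ xs - b) ≤ g (A *ᵥ y - b))
    (hus : Aᵀ *ᵥ us = 0)
    (hsub : ∀ y, g (A *ᵥ xs - b) + us ⬝ᵥ (y - (A *ᵥ xs - b)) ≤ g y) :
    -- the iterates converge to a primal solution and a dual certificate for it:
    ∃ (xb : Fin n → ℝ) (ub : Fin m → ℝ),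
      (∀ y, g (A *ᵥ xb - b) ≤ g (A *ᵥ y - b)) ∧
      Aᵀ *ᵥ ub = 0 ∧
      (∀ y, g (A *ᵥ xb - b) + ub ⬝ᵥ (y - (A *ᵥ xb - b)) ≤ g y) ∧
      Tendsto x atTop (𝓝 xb) ∧ Tendsto u atTop (𝓝 ub) :=
  ncs_convergence_general A b α hα g hg M hMsymm hMpsd x u hx hu xs us hus hsub
end

section
/- If x⋆ is a primal solution and u⋆ is a dual certificate for x⋆, then (x⋆, u⋆) is a fixed point of the NCS iteration: setting x^k = x⋆ and u^k = u⋆ yields x^{k+1} = x⋆ and u^{k+1} = u⋆. -/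
open Matrix

theorem ncs_fixed_point
    {m n : ℕ}
    (A : Matrix (Fin m) (Fin n) ℝ) (b : Fin m → ℝ)
    (α : ℝ) (hα : 0 < α)
    (g : (Fin m → ℝ) → ℝ) (hg : ConvexOn ℝ Set.univ g)
    (M : Matrix (Fin n) (Fin n) ℝ) (hMsymm : Mᵀ = M)
    (hMpsd : (M - α • (Aᵀ * A)).PosSemidef)
    -- a primal solution x⋆ and a dual certificate u⋆ for it:
    (xs : Fin n → ℝ) (us : Fin m → ℝ)
    (hxs : ∀ y, g (A *ᵥ xs - b) ≤ g (A *ᵥ y - b))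
    (hus : Aᵀ *ᵥ us = 0)
    (hsub : ∀ y, g (A *ᵥ xs - b) + us ⬝ᵥ (y - (A *ᵥ xs - b)) ≤ g y)
    -- x1 is the next x-iterate obtained from (x⋆, u⋆):
    (x1 : Fin n → ℝ) (hx1 : x1 = xs - mpInv M *ᵥ (Aᵀ *ᵥ us)) :
    -- then x^{k+1} = x⋆ and u^{k+1} = prox_{αg*}(u⋆ + α(A(2x^{k+1} − x⋆) − b)) = u⋆:
    x1 = xs ∧ ProxRel g α (us + α • (A *ᵥ ((2 : ℝ) • x1 - xs) - b)) us := by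
  have hα' : α ≠ 0 := ne_of_gt hα
  have hx : x1 = xs := by rw [hx1, hus, Matrix.mulVec_zero, sub_zero]
  refine ⟨hx, ?_⟩
  rw [hx]
  have h2 : (2 : ℝ) • xs - xs = xs := by module
  rw [h2]
  set a := A *ᵥ xs - b with ha
  intro y _
  simp only [Set.mem_setOf_eq]
  have harg : α⁻¹ • (us + α • a - us) = a := by
    rw [add_sub_cancel_left, smul_smul, inv_mul_cancel₀ hα', one_smul]
  rw [harg]
  have hz : α⁻¹ • (us + α • a) = α⁻¹ • us + a := by
    rw [smul_add, smul_smul, inv_mul_cancel₀ hα', one_smul]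
  rw [hz]
  have key := hsub y
  set d := y - a with hd
  set u' := α⁻¹ • us with hu'
  have h1 : a - (u' + a) = -u' := by module
  have h3 : y - (u' + a) = d - u' := by rw [hd]; module
  rw [h1, h3]
  have e1 : (-u') ⬝ᵥ (-u') = u' ⬝ᵥ u' := by
    simp [neg_dotProduct, dotProduct_neg]
  have e2 : (d - u') ⬝ᵥ (d - u') = d ⬝ᵥ d - 2 * (u' ⬝ᵥ d) + u' ⬝ᵥ u' := by
    simp [sub_dotProduct, dotProduct_sub,
      dotProduct_comm d u']
    ring
  have e3 : us ⬝ᵥ d = α * (u' ⬝ᵥ d) := by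
    rw [hu', smul_dotProduct, smul_eq_mul]
    field_simp
  have e4 : (0:ℝ) ≤ d ⬝ᵥ d := by simpa using dotProduct_star_self_nonneg d
  rw [e1, e2]
  rw [e3] at key
  nlinarith [key, e4, hα]
end

section
/- Let (x^k, u^k) be NCS iterates and let x⋆ be a primal solution with dual certificate u⋆. Then for every k ≥ 0, D²(x^{k+1} − x⋆, u^{k+1} − u⋆) ≤ D²(x^k − x⋆, u^k − u⋆) − D²(x^{k+1} − x^k, u^{k+1} − u^k). -/
/-!
`Dsq` is the quadratic form of the bilinear form `Dinner`, so by polarization it suffices to show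
that `Dinner` pairs `z^{k+1} - z⋆` with `z^{k+1} - z^k` nonpositively, where `z = (x, u)`.
Since `M - αAᵀA ⪰ 0`, `ker M ⊆ ker A`, so `Aᵀu^k ∈ range M` and the `x`-update gives
`M (x^{k+1} - x^k) = -Aᵀu^k`. Together with `Aᵀu⋆ = 0` this turns the pairing into
`-α ⟨u^{k+1} - u⋆, y^{k+1} - (Ax⋆ - b)⟩`, where `y^{k+1}` is the minimizer inside the prox.
The optimality condition of that minimization makes `u^{k+1}` a subgradient of `g` at `y^{k+1}`,
`u⋆` is one at `Ax⋆ - b`, and monotonicity of the subdifferential gives the sign.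
-/

open Matrix

/-- The squared seminorm `D²(x, u) = ‖u − αAx‖² + ‖x‖²_{αM − α²AᵀA}`. -/
noncomputable def Dsq {m n : ℕ} (A : Matrix (Fin m) (Fin n) ℝ) (α : ℝ)
    (M : Matrix (Fin n) (Fin n) ℝ) (x : Fin n → ℝ) (u : Fin m → ℝ) : ℝ :=
  (u - α • (A *ᵥ x)) ⬝ᵥ (u - α • (A *ᵥ x)) +
    x ⬝ᵥ ((α • M - α ^ 2 • (Aᵀ * A)) *ᵥ x)

/-- The seminorm `D(x, u) = (‖u − αAx‖² + ‖x‖²_{αM − α²AᵀA})^{1/2}`. -/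
noncomputable def Dnorm {m n : ℕ} (A : Matrix (Fin m) (Fin n) ℝ) (α : ℝ)
    (M : Matrix (Fin n) (Fin n) ℝ) (x : Fin n → ℝ) (u : Fin m → ℝ) : ℝ :=
  Real.sqrt (Dsq A α M x u)

open Filter Set Topology

namespace Matrix

variable {m n : Type*} [Fintype m] [Fintype n]

theorem IsSymm.dotProduct_mulVec_comm {M : Matrix n n ℝ} (hM : M.IsSymm) (x y : n → ℝ) :
    x ⬝ᵥ (M *ᵥ y) = y ⬝ᵥ (M *ᵥ x) := by
  simpa [hM.eq] using dotProduct_transpose_mulVec M x y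

theorem IsSymm.exists_penrose [DecidableEq n] {M : Matrix n n ℝ} (hM : M.IsSymm) :
    ∃ X : Matrix n n ℝ,
      M * X * M = M ∧ X * M * X = X ∧ (M * X)ᵀ = M * X ∧ (X * M)ᵀ = X * M := by
  have hM' : IsSelfAdjoint M := isHermitian_iff_isSymm.mpr hM
  have hmul (f g : ℝ → ℝ) : cfc f M * cfc g M = cfc (f * g) M :=
    (cfc_mul f g M (M.finite_real_spectrum.continuousOn f)
      (M.finite_real_spectrum.continuousOn g)).symm
  have hmul_left (f : ℝ → ℝ) : M * cfc f M = cfc (id * f) M := by rw [← hmul, cfc_id ℝ M]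
  have hmul_right (f : ℝ → ℝ) : cfc f M * M = cfc (f * id) M := by rw [← hmul, cfc_id ℝ M]
  have htranspose (f : ℝ → ℝ) : (cfc f M)ᵀ = cfc f M := by
    rw [← conjTranspose_eq_transpose_of_trivial]; exact cfc_predicate f M
  -- `0⁻¹ = 0`, so `x ↦ x⁻¹` is the scalar pseudo-inverse on the spectrum.
  refine ⟨cfc (fun x : ℝ => x⁻¹) M, ?_, ?_, ?_, ?_⟩
  · rw [hmul_left, hmul_right]
    conv_rhs => rw [← cfc_id ℝ M]
    exact cfc_congr fun x _ => by by_cases hx : x = 0 <;> simp [hx]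
  · rw [hmul_right, hmul]
    exact cfc_congr fun x _ => by by_cases hx : x = 0 <;> simp [hx]
  · rw [hmul_left, htranspose]
  · rw [hmul_right, htranspose]

/-- Penrose conditions 1 and 3 make `M X` the orthogonal projection onto `range M = (ker M)ᗮ`. -/
theorem IsSymm.mulVec_mulVec_eq_self_of_penrose {M X : Matrix n n ℝ} (hM : M.IsSymm)
    (h₁ : M * X * M = M) (h₃ : (M * X)ᵀ = M * X) {v : n → ℝ}
    (hv : ∀ w, M *ᵥ w = 0 → w ⬝ᵥ v = 0) :
    M *ᵥ (X *ᵥ v) = v := by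
  have hMMX : M * M * X = M := by
    calc M * M * X = Mᵀ * (M * X)ᵀ := by rw [hM.eq, h₃, mul_assoc]
      _ = (M * X * M)ᵀ := (transpose_mul _ _).symm
      _ = M := by rw [h₁, hM.eq]
  set w := v - M *ᵥ (X *ᵥ v)
  have hMw : M *ᵥ w = 0 := by
    rw [mulVec_sub, mulVec_mulVec, mulVec_mulVec, hMMX, sub_self]
  have hww : w ⬝ᵥ w = 0 := by
    calc w ⬝ᵥ w = w ⬝ᵥ v - (X *ᵥ v) ⬝ᵥ (M *ᵥ w) := by
          rw [hM.dotProduct_mulVec_comm (X *ᵥ v), ← dotProduct_sub]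
      _ = 0 := by rw [hv w hMw, hMw, dotProduct_zero, sub_zero]
  exact (sub_eq_zero.mp (dotProduct_self_eq_zero.mp hww)).symm

theorem PosSemidef.mulVec_eq_zero_of_sub_smul {M : Matrix n n ℝ} {A : Matrix m n ℝ} {c : ℝ}
    (hMA : (M - c • (Aᵀ * A)).PosSemidef) (hc : 0 < c) {w : n → ℝ} (hw : M *ᵥ w = 0) :
    A *ᵥ w = 0 := by
  have h := hMA.dotProduct_mulVec_nonneg w
  rw [star_trivial, sub_mulVec, hw, smul_mulVec, ← mulVec_mulVec, dotProduct_sub,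
    dotProduct_zero, dotProduct_smul, dotProduct_transpose_mulVec, smul_eq_mul,
    zero_sub, neg_nonneg] at h
  have hAw : (A *ᵥ w) ⬝ᵥ (A *ᵥ w) ≤ 0 := nonpos_of_mul_nonpos_right h hc
  exact dotProduct_self_eq_zero.mp (le_antisymm hAw (dotProduct_self_star_nonneg _))

end Matrix

theorem mpInv_spec_s4 {k l : ℕ} {A : Matrix (Fin k) (Fin l) ℝ}
    (h : ∃ X : Matrix (Fin l) (Fin k) ℝ,
      A * X * A = A ∧ X * A * X = X ∧ (A * X)ᵀ = A * X ∧ (X * A)ᵀ = X * A) :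
    A * mpInv A * A = A ∧ mpInv A * A * mpInv A = mpInv A ∧
      (A * mpInv A)ᵀ = A * mpInv A ∧ (mpInv A * A)ᵀ = mpInv A * A := by
  rw [mpInv, dif_pos h]
  exact h.choose_spec

theorem mulVec_mpInv_mulVec_transpose {m n : ℕ} {M : Matrix (Fin n) (Fin n) ℝ}
    {A : Matrix (Fin m) (Fin n) ℝ} {c : ℝ} (hM : M.IsSymm)
    (hMA : (M - c • (Aᵀ * A)).PosSemidef) (hc : 0 < c) (v : Fin m → ℝ) :
    M *ᵥ (mpInv M *ᵥ (Aᵀ *ᵥ v)) = Aᵀ *ᵥ v := by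
  obtain ⟨h₁, -, h₃, -⟩ := mpInv_spec_s4 hM.exists_penrose
  refine hM.mulVec_mulVec_eq_self_of_penrose h₁ h₃ fun w hw => ?_
  rw [dotProduct_transpose_mulVec, hMA.mulVec_eq_zero_of_sub_smul hc hw, dotProduct_zero]

theorem nonneg_of_forall_Ioc_nonneg_add_mul {a c : ℝ} (h : ∀ t ∈ Ioc (0 : ℝ) 1, 0 ≤ a + t * c) :
    0 ≤ a := by
  have hlim : Tendsto (fun t : ℝ => a + t * c) (𝓝[>] 0) (𝓝 a) := by
    have : Tendsto (fun t : ℝ => a + t * c) (𝓝 0) (𝓝 (a + 0 * c)) :=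
      (continuous_const.add (continuous_id.mul continuous_const)).tendsto 0
    simpa using this.mono_left nhdsWithin_le_nhds
  exact ge_of_tendsto hlim (eventually_of_mem (Ioc_mem_nhdsGT one_pos) h)

section Subgradient

variable {ι : Type*} [Fintype ι]

theorem ConvexOn.add_dotProduct_sub_le_of_isMinOn_add_sq {g : (ι → ℝ) → ℝ}
    (hg : ConvexOn ℝ univ g) {α : ℝ} {c p : ι → ℝ}
    (hp : IsMinOn (fun y => g y + (α / 2) * ((y - c) ⬝ᵥ (y - c))) univ p) (y : ι → ℝ) :
    g p + (α • (c - p)) ⬝ᵥ (y - p) ≤ g y := by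
  suffices h : ∀ t ∈ Ioc (0 : ℝ) 1, 0 ≤ (g y - g p - (α • (c - p)) ⬝ᵥ (y - p)) +
      t * ((α / 2) * ((y - p) ⬝ᵥ (y - p))) by
    linarith [nonneg_of_forall_Ioc_nonneg_add_mul h]
  rintro t ⟨ht₀, ht₁⟩
  have hmin := isMinOn_iff.mp hp (p + t • (y - p)) (mem_univ _)
  have hconv := hg.2 (mem_univ p) (mem_univ y) (by linarith : (0 : ℝ) ≤ 1 - t) ht₀.le
    (by ring)
  rw [show (1 - t) • p + t • y = p + t • (y - p) by module, smul_eq_mul, smul_eq_mul] at hconv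
  have hsq (s : ℝ) (a d : ι → ℝ) :
      (s • d - a) ⬝ᵥ (s • d - a) = a ⬝ᵥ a - 2 * s * (a ⬝ᵥ d) + s ^ 2 * (d ⬝ᵥ d) := by
    simp only [dotProduct_sub, sub_dotProduct, dotProduct_smul, smul_dotProduct, smul_eq_mul,
      dotProduct_comm d a]
    ring
  rw [show p + t • (y - p) - c = t • (y - p) - (c - p) by module,
    show p - c = (0 : ℝ) • (y - p) - (c - p) by module, hsq, hsq] at hmin
  rw [smul_dotProduct, smul_eq_mul]
  nlinarith

theorem subgradient_monotone {g : (ι → ℝ) → ℝ} {p q u v : ι → ℝ}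
    (hu : ∀ y, g p + u ⬝ᵥ (y - p) ≤ g y) (hv : ∀ y, g q + v ⬝ᵥ (y - q) ≤ g y) :
    0 ≤ (u - v) ⬝ᵥ (p - q) := by
  have h₁ := hu q
  have h₂ := hv p
  rw [← neg_sub p q, dotProduct_neg] at h₁
  rw [sub_dotProduct]
  linarith

end Subgradient

theorem ProxRel.subgradient {m : ℕ} {g : (Fin m → ℝ) → ℝ} (hg : ConvexOn ℝ univ g) {α : ℝ}
    (hα : α ≠ 0) {z u : Fin m → ℝ} (h : ProxRel g α z u) (y : Fin m → ℝ) :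
    g (α⁻¹ • (z - u)) + u ⬝ᵥ (y - α⁻¹ • (z - u)) ≤ g y := by
  have hu : α • (α⁻¹ • z - α⁻¹ • (z - u)) = u := by
    rw [← smul_sub, smul_smul, mul_inv_cancel₀ hα, one_smul, sub_sub_cancel]
  simpa only [hu] using hg.add_dotProduct_sub_le_of_isMinOn_add_sq h y

section Dinner

variable {m n : ℕ} (A : Matrix (Fin m) (Fin n) ℝ) (α : ℝ) (M : Matrix (Fin n) (Fin n) ℝ)

noncomputable def Dinner (x : Fin n → ℝ) (u : Fin m → ℝ) (x' : Fin n → ℝ) (u' : Fin m → ℝ) : ℝ :=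
  (u - α • (A *ᵥ x)) ⬝ᵥ (u' - α • (A *ᵥ x')) + x ⬝ᵥ ((α • M - α ^ 2 • (Aᵀ * A)) *ᵥ x')

variable {M}

theorem Dsq_sub (hM : M.IsSymm) (x x' : Fin n → ℝ) (u u' : Fin m → ℝ) :
    Dsq A α M (x - x') (u - u') =
      Dsq A α M x u + Dsq A α M x' u' - 2 * Dinner A α M x u x' u' := by
  have hN : (α • M - α ^ 2 • (Aᵀ * A)).IsSymm :=
    (hM.smul α).sub (IsSymm.smul (by simp [IsSymm]) _)
  have hres : (u - u') - α • (A *ᵥ (x - x')) = (u - α • (A *ᵥ x)) - (u' - α • (A *ᵥ x')) := by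
    rw [mulVec_sub]; module
  unfold Dsq Dinner
  rw [hres]
  generalize u - α • (A *ᵥ x) = r
  generalize u' - α • (A *ᵥ x') = r'
  simp only [mulVec_sub, dotProduct_sub, sub_dotProduct, dotProduct_comm r',
    hN.dotProduct_mulVec_comm x']
  ring

theorem Dsq_le_sub_of_Dinner_nonpos (hM : M.IsSymm) {x d : Fin n → ℝ} {u e : Fin m → ℝ}
    (h : Dinner A α M x u d e ≤ 0) :
    Dsq A α M x u ≤ Dsq A α M (x - d) (u - e) - Dsq A α M d e := by
  rw [Dsq_sub A α hM]
  linarith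

theorem Dinner_eq_of_mulVec_eq {x d : Fin n → ℝ} {u e : Fin m → ℝ}
    (hd : M *ᵥ d = -(Aᵀ *ᵥ (u - e))) :
    Dinner A α M x u d e = u ⬝ᵥ (e - α • (A *ᵥ (x + d))) := by
  have hMd : x ⬝ᵥ (M *ᵥ d) = -((A *ᵥ x) ⬝ᵥ (u - e)) := by
    rw [hd, dotProduct_neg, dotProduct_transpose_mulVec, dotProduct_comm]
  simp only [Dinner, sub_mulVec, smul_mulVec, ← mulVec_mulVec, dotProduct_sub, dotProduct_smul,
    dotProduct_transpose_mulVec, hMd, mulVec_add, smul_add, sub_dotProduct, smul_dotProduct,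
    smul_eq_mul, dotProduct_comm (A *ᵥ x), dotProduct_add]
  ring

end Dinner

theorem ncs_fejer_general
    {m n : ℕ}
    (A : Matrix (Fin m) (Fin n) ℝ) (b : Fin m → ℝ)
    (α : ℝ) (hα : 0 < α)
    (g : (Fin m → ℝ) → ℝ) (hg : ConvexOn ℝ Set.univ g)
    (M : Matrix (Fin n) (Fin n) ℝ) (hMsymm : Mᵀ = M)
    (hMpsd : (M - α • (Aᵀ * A)).PosSemidef)
    -- NCS iterates:
    (x : ℕ → Fin n → ℝ) (u : ℕ → Fin m → ℝ)
    (hx : ∀ k, x (k + 1) = x k - mpInv M *ᵥ (Aᵀ *ᵥ u k))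
    (hu : ∀ k, ProxRel g α
      (u k + α • (A *ᵥ ((2 : ℝ) • x (k + 1) - x k) - b)) (u (k + 1)))
    -- a primal solution x⋆ with dual certificate u⋆:
    (xs : Fin n → ℝ) (us : Fin m → ℝ)
    (hus : Aᵀ *ᵥ us = 0)
    (hsub : ∀ y, g (A *ᵥ xs - b) + us ⬝ᵥ (y - (A *ᵥ xs - b)) ≤ g y) :
    ∀ k : ℕ,
      Dsq A α M (x (k + 1) - xs) (u (k + 1) - us) ≤
        Dsq A α M (x k - xs) (u k - us) -
          Dsq A α M (x (k + 1) - x k) (u (k + 1) - u k) := by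
  intro k
  set z := u k + α • (A *ᵥ ((2 : ℝ) • x (k + 1) - x k) - b)
  set y := α⁻¹ • (z - u (k + 1))
  have hstep : M *ᵥ (x (k + 1) - x k) = -(Aᵀ *ᵥ ((u (k + 1) - us) - (u (k + 1) - u k))) := by
    rw [sub_sub_sub_cancel_left, mulVec_sub Aᵀ, hus, sub_zero, hx k, sub_sub_cancel_left,
      mulVec_neg, mulVec_mpInv_mulVec_transpose hMsymm hMpsd hα]
  have hmono : 0 ≤ (u (k + 1) - us) ⬝ᵥ (y - (A *ᵥ xs - b)) :=
    subgradient_monotone ((hu k).subgradient hg hα.ne') hsub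
  have hαy : α • y = z - u (k + 1) := by
    simp only [y, smul_smul, mul_inv_cancel₀ hα.ne', one_smul]
  have hres : (u (k + 1) - u k) - α • (A *ᵥ ((x (k + 1) - xs) + (x (k + 1) - x k))) =
      -(α • (y - (A *ᵥ xs - b))) := by
    rw [smul_sub α y, hαy]
    simp only [z, mulVec_add, mulVec_sub, mulVec_smul]
    module
  have key := Dsq_le_sub_of_Dinner_nonpos A α hMsymm (x := x (k + 1) - xs) (u := u (k + 1) - us)
    (d := x (k + 1) - x k) (e := u (k + 1) - u k) <| by
      rw [Dinner_eq_of_mulVec_eq A α hstep, hres, dotProduct_neg, dotProduct_smul, smul_eq_mul,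
        neg_nonpos]
      exact mul_nonneg hα.le hmono
  rwa [sub_sub_sub_cancel_left, sub_sub_sub_cancel_left] at key

theorem ncs_fejer
    {m n : ℕ}
    (A : Matrix (Fin m) (Fin n) ℝ) (b : Fin m → ℝ)
    (α : ℝ) (hα : 0 < α)
    (g : (Fin m → ℝ) → ℝ) (hg : ConvexOn ℝ Set.univ g)
    (M : Matrix (Fin n) (Fin n) ℝ) (hMsymm : Mᵀ = M)
    (hMpsd : (M - α • (Aᵀ * A)).PosSemidef)
    -- NCS iterates:
    (x : ℕ → Fin n → ℝ) (u : ℕ → Fin m → ℝ)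
    (hx : ∀ k, x (k + 1) = x k - mpInv M *ᵥ (Aᵀ *ᵥ u k))
    (hu : ∀ k, ProxRel g α
      (u k + α • (A *ᵥ ((2 : ℝ) • x (k + 1) - x k) - b)) (u (k + 1)))
    -- a primal solution x⋆ with dual certificate u⋆:
    (xs : Fin n → ℝ) (us : Fin m → ℝ)
    (hxs : ∀ y, g (A *ᵥ xs - b) ≤ g (A *ᵥ y - b))
    (hus : Aᵀ *ᵥ us = 0)
    (hsub : ∀ y, g (A *ᵥ xs - b) + us ⬝ᵥ (y - (A *ᵥ xs - b)) ≤ g y) :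
    ∀ k : ℕ,
      Dsq A α M (x (k + 1) - xs) (u (k + 1) - us) ≤
        Dsq A α M (x k - xs) (u k - us) -
          Dsq A α M (x (k + 1) - x k) (u (k + 1) - u k) :=
  ncs_fejer_general A b α hα g hg M hMsymm hMpsd x u hx hu xs us hus hsub
end

section
/- Let A ∈ ℝ^{m×n}, α > 0, let M ∈ ℝ^{n×n} be symmetric with M − αAᵀA positive semidefinite, and let B be the positive semidefinite square root of (1/α)M − AᵀA. Then for every u ∈ ℝᵐ and every x, y ∈ ℝⁿ, setting x⁺ := x − M⁺Aᵀu (M⁺ the Moore–Penrose pseudoinverse), one has α⟨B(x⁺ − x), B(x⁺ − y)⟩ + α⟨A(x⁺ − x), A(x⁺ − y)⟩ + ⟨u, A(x⁺ − y)⟩ = 0. -/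
open Matrix

/-!
Write `d = xp - x = -M⁺Aᵀu` and `e = xp - y`. Since `B` is symmetric, the first two terms equal
`⟨α (B² + AᵀA) d, e⟩ = ⟨M d, e⟩`, so it suffices that `M M⁺ Aᵀ = Aᵀ`, i.e. that the range of `Aᵀ`
lies in the range of `M`. Dually, `ker M ⊆ ker A`: if `M v = 0` then positive semidefiniteness of
`M - α AᵀA` forces `-α ‖A v‖² ≥ 0`. The Penrose conditions for the symmetric `M` are met by
`x ↦ x⁻¹` (with `0⁻¹ = 0`) in the functional calculus of `M`, so `mpInv M` is not the junk value.
-/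

namespace Matrix

theorem exists_penrose_of_isHermitian {n : Type*} [Fintype n] [DecidableEq n]
    {M : Matrix n n ℝ} (hM : M.IsHermitian) :
    ∃ X : Matrix n n ℝ,
      M * X * M = M ∧ X * M * X = X ∧ (M * X)ᵀ = M * X ∧ (X * M)ᵀ = X * M := by
  have hcont (f : ℝ → ℝ) : ContinuousOn f (spectrum ℝ M) :=
    M.finite_real_spectrum.continuousOn f
  have hmul (f g : ℝ → ℝ) : cfc f M * cfc g M = cfc (fun x => f x * g x) M :=
    (cfc_mul f g M (hcont f) (hcont g)).symm
  have hleft (f : ℝ → ℝ) : M * cfc f M = cfc (fun x => x * f x) M := by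
    simpa only [cfc_id ℝ M hM.isSelfAdjoint, id_eq] using hmul id f
  have hright (f : ℝ → ℝ) : cfc f M * M = cfc (fun x => f x * x) M := by
    simpa only [cfc_id ℝ M hM.isSelfAdjoint, id_eq] using hmul f id
  have hsymm (f : ℝ → ℝ) : (cfc f M)ᵀ = cfc f M :=
    (isHermitian_iff_isSymm.mp (cfc_predicate f M)).eq
  refine ⟨cfc (fun x : ℝ => x⁻¹) M, ?_, ?_, ?_, ?_⟩ <;> simp only [hmul, hleft, hright, hsymm]
  · simpa [mul_inv_mul_cancel] using cfc_id' ℝ M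
  · exact cfc_congr fun x _ => by simpa using mul_inv_mul_cancel x⁻¹

theorem mul_mpInv_mul_self {k : ℕ} {M : Matrix (Fin k) (Fin k) ℝ} (hM : Mᵀ = M) :
    M * mpInv M * M = M := by
  have h := exists_penrose_of_isHermitian (isHermitian_iff_isSymm.mpr hM)
  rw [mpInv, dif_pos h]
  exact h.choose_spec.1

open scoped ComplexOrder MatrixOrder in
theorem mul_eq_zero_of_posSemidef_sub_smul {𝕜 l m n : Type*} [RCLike 𝕜]
    [Fintype l] [Fintype m] [Fintype n] {M : Matrix n n 𝕜} {A : Matrix m n 𝕜} {c : ℝ}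
    (hc : 0 < c) (hMA : (M - c • (Aᴴ * A)).PosSemidef) {N : Matrix n l 𝕜} (hN : M * N = 0) :
    A * N = 0 := by
  have hneg : (-((A * N)ᴴ * (A * N))).PosSemidef := by
    convert (hMA.conjTranspose_mul_mul_same N).smul (inv_nonneg.2 hc.le) using 1
    rw [Matrix.mul_sub, Matrix.sub_mul, Matrix.mul_assoc, hN, Matrix.mul_zero, zero_sub, smul_neg,
      Matrix.mul_smul, Matrix.smul_mul, smul_smul, inv_mul_cancel₀ hc.ne', one_smul,
      conjTranspose_mul, Matrix.mul_assoc, Matrix.mul_assoc, Matrix.mul_assoc]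
  have hzero : (A * N)ᴴ * (A * N) = 0 :=
    le_antisymm (by simpa [le_iff] using hneg) (posSemidef_conjTranspose_mul_self _).nonneg
  exact conjTranspose_mul_self_eq_zero.mp hzero

theorem mul_mul_transpose_eq_transpose_of_ker_le {R m n : Type*} [CommRing R]
    [Fintype m] [Fintype n] [DecidableEq n] {M X : Matrix n n R} {A : Matrix m n R}
    (hM : Mᵀ = M) (hMXM : M * X * M = M) (hker : ∀ N : Matrix n n R, M * N = 0 → A * N = 0) :
    M * X * Aᵀ = Aᵀ := by
  have hMXtM : M * Xᵀ * M = M := by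
    simpa [transpose_mul, hM, Matrix.mul_assoc] using congrArg transpose hMXM
  have hAXtM : A * (Xᵀ * M) = A := by
    rw [← sub_eq_zero, ← Matrix.mul_one A, Matrix.mul_assoc, ← Matrix.mul_sub, Matrix.one_mul]
    exact hker _ (by rw [Matrix.mul_sub, ← Matrix.mul_assoc, hMXtM, Matrix.mul_one, sub_self])
  simpa [transpose_mul, hM, Matrix.mul_assoc] using congrArg transpose hAXtM

theorem mulVec_dotProduct_mulVec {R m n : Type*} [CommSemiring R] [Fintype m] [Fintype n]
    (A : Matrix m n R) (v w : n → R) : (A *ᵥ v) ⬝ᵥ (A *ᵥ w) = ((Aᵀ * A) *ᵥ v) ⬝ᵥ w := by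
  rw [dotProduct_mulVec, ← mulVec_transpose, mulVec_mulVec]

end Matrix

theorem ncs_orthogonality_identity
    {m n : ℕ}
    (A : Matrix (Fin m) (Fin n) ℝ)
    (α : ℝ) (hα : 0 < α)
    (M : Matrix (Fin n) (Fin n) ℝ) (hMsymm : Mᵀ = M)
    (hMpsd : (M - α • (Aᵀ * A)).PosSemidef)
    -- B is the positive semidefinite square root of (1/α)M − AᵀA:
    (B : Matrix (Fin n) (Fin n) ℝ) (hBpsd : B.PosSemidef)
    (hBsq : B * B = α⁻¹ • M - Aᵀ * A) :
    ∀ (u : Fin m → ℝ) (x y xp : Fin n → ℝ),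
      xp = x - mpInv M *ᵥ (Aᵀ *ᵥ u) →
      α * ((B *ᵥ (xp - x)) ⬝ᵥ (B *ᵥ (xp - y))) +
        α * ((A *ᵥ (xp - x)) ⬝ᵥ (A *ᵥ (xp - y))) +
        u ⬝ᵥ (A *ᵥ (xp - y)) = 0 := by
  intro u x y xp hxp
  have hB : Bᵀ = B := (isHermitian_iff_isSymm.mp hBpsd.isHermitian).eq
  have hM : α • (Bᵀ * B + Aᵀ * A) = M := by
    rw [hB, hBsq, sub_add_cancel, smul_smul, mul_inv_cancel₀ hα.ne', one_smul]
  have hrange : M * mpInv M * Aᵀ = Aᵀ :=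
    mul_mul_transpose_eq_transpose_of_ker_le hMsymm (mul_mpInv_mul_self hMsymm)
      fun N hN => mul_eq_zero_of_posSemidef_sub_smul hα hMpsd hN
  have hstep : M *ᵥ (xp - x) = -(Aᵀ *ᵥ u) := by
    rw [hxp, sub_sub_cancel_left, mulVec_neg, mulVec_mulVec, mulVec_mulVec, hrange]
  calc α * ((B *ᵥ (xp - x)) ⬝ᵥ (B *ᵥ (xp - y))) + α * ((A *ᵥ (xp - x)) ⬝ᵥ (A *ᵥ (xp - y))) +
        u ⬝ᵥ (A *ᵥ (xp - y))
      = (M *ᵥ (xp - x)) ⬝ᵥ (xp - y) + (Aᵀ *ᵥ u) ⬝ᵥ (xp - y) := by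
        rw [mulVec_dotProduct_mulVec, mulVec_dotProduct_mulVec, dotProduct_mulVec,
          ← mulVec_transpose, ← hM, smul_mulVec, add_mulVec, smul_dotProduct, add_dotProduct,
          smul_eq_mul, mul_add]
    _ = 0 := by rw [hstep, neg_dotProduct, neg_add_cancel]
end

section
/- For any real matrices A ∈ ℝ^{m×n} and B ∈ ℝ^{p×n}, one has A (AᵀA + BᵀB)⁺ (AᵀA + BᵀB) = A, where (·)⁺ denotes the Moore–Penrose pseudoinverse. -/
open Matrix

lemma exists_pinv {n : ℕ} (G : Matrix (Fin n) (Fin n) ℝ) (hG : G.IsHermitian) :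
    ∃ X : Matrix (Fin n) (Fin n) ℝ,
      G * X * G = G ∧ X * G * X = X ∧ (G * X)ᵀ = G * X ∧ (X * G)ᵀ = X * G := by
  classical
  set U : Matrix (Fin n) (Fin n) ℝ := (hG.eigenvectorUnitary : Matrix (Fin n) (Fin n) ℝ) with hUdef
  have hU : star U * U = 1 := (Matrix.mem_unitaryGroup_iff').mp hG.eigenvectorUnitary.2
  have hU' : U * star U = 1 := (Matrix.mem_unitaryGroup_iff).mp hG.eigenvectorUnitary.2
  set d : Fin n → ℝ := hG.eigenvalues with hddef
  have hGspec : G = U * diagonal (RCLike.ofReal ∘ d) * star U := hG.spectral_theorem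
  have hD : (RCLike.ofReal ∘ d : Fin n → ℝ) = d := by ext i; simp
  rw [hD] at hGspec
  have h1 : (fun i => d i * ((d i)⁻¹ * d i)) = d := by
    ext i
    rcases eq_or_ne (d i) 0 with h | h
    · simp [h]
    · field_simp
  have h2 : (fun i => (d i)⁻¹ * (d i * (d i)⁻¹)) = fun i => (d i)⁻¹ := by
    ext i
    rcases eq_or_ne (d i) 0 with h | h
    · simp [h]
    · field_simp
  refine ⟨U * diagonal (fun i => (d i)⁻¹) * star U, ?_, ?_, ?_, ?_⟩
  · rw [hGspec]
    simp only [Matrix.mul_assoc]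
    rw [← Matrix.mul_assoc (star U) U, hU, Matrix.one_mul,
        ← Matrix.mul_assoc (star U) U, hU, Matrix.one_mul]
    simp only [← Matrix.mul_assoc, diagonal_mul_diagonal, h1]
  · rw [hGspec]
    simp only [Matrix.mul_assoc]
    rw [← Matrix.mul_assoc (star U) U, hU, Matrix.one_mul,
        ← Matrix.mul_assoc (star U) U, hU, Matrix.one_mul]
    simp only [← Matrix.mul_assoc, diagonal_mul_diagonal, h2]
  · rw [hGspec]
    simp only [Matrix.mul_assoc]
    rw [← Matrix.mul_assoc (star U) U, hU, Matrix.one_mul]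
    simp only [← Matrix.mul_assoc, diagonal_mul_diagonal]
    have : ∀ M : Matrix (Fin n) (Fin n) ℝ, Mᵀ = Mᴴ := by
      intro M; ext i j; simp [conjTranspose_apply]
    rw [this]
    simp only [conjTranspose_mul, conjTranspose_conjTranspose, star_eq_conjTranspose,
      diagonal_conjTranspose]
    simp [Matrix.mul_assoc, star]
  · rw [hGspec]
    simp only [Matrix.mul_assoc]
    rw [← Matrix.mul_assoc (star U) U, hU, Matrix.one_mul]
    simp only [← Matrix.mul_assoc, diagonal_mul_diagonal]
    have : ∀ M : Matrix (Fin n) (Fin n) ℝ, Mᵀ = Mᴴ := by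
      intro M; ext i j; simp [conjTranspose_apply]
    rw [this]
    simp only [conjTranspose_mul, conjTranspose_conjTranspose, star_eq_conjTranspose,
      diagonal_conjTranspose]
    simp [Matrix.mul_assoc, star]

theorem mul_pinv_mul_self
    {m n p : ℕ}
    (A : Matrix (Fin m) (Fin n) ℝ) (B : Matrix (Fin p) (Fin n) ℝ) :
    A * (mpInv (Aᵀ * A + Bᵀ * B) * (Aᵀ * A + Bᵀ * B)) = A := by
  classical
  set G : Matrix (Fin n) (Fin n) ℝ := Aᵀ * A + Bᵀ * B with hGdef
  have hGherm : G.IsHermitian :=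
    (Matrix.isHermitian_conjTranspose_mul_self A).add (Matrix.isHermitian_conjTranspose_mul_self B)
  have hex := exists_pinv G hGherm
  have hmp : mpInv G = hex.choose := by
    rw [mpInv, dif_pos hex]
  obtain ⟨h1, h2, h3, h4⟩ := hex.choose_spec
  set X := hex.choose with hXdef
  rw [hmp]
  set P := X * G with hPdef
  have hGsym : Gᵀ = G := by
    conv_rhs => rw [← hGherm.eq]
    ext i j
    simp [conjTranspose_apply]
  have hGP : G * P = G := by rw [hPdef, ← Matrix.mul_assoc, h1]
  have hG1P : G * (1 - P) = 0 := by rw [Matrix.mul_sub, Matrix.mul_one, hGP, sub_self]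
  set C := A * (1 - P) with hCdef
  set D := B * (1 - P) with hDdef
  have hkey : Cᵀ * C + Dᵀ * D = 0 := by
    have : (1 - P)ᵀ * (G * (1 - P)) = 0 := by rw [hG1P, Matrix.mul_zero]
    rw [hGdef] at this
    rw [hCdef, hDdef]
    simp only [Matrix.transpose_mul, Matrix.add_mul, Matrix.mul_add, Matrix.mul_assoc] at this ⊢
    linear_combination (norm := skip) this
    abel
  have hC0 : C = 0 := by
    ext i j
    have hjj := congrFun (congrFun hkey j) j
    simp only [Matrix.add_apply, Matrix.mul_apply, Matrix.zero_apply,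
      Matrix.transpose_apply] at hjj
    have hs1 : ∀ k, (0:ℝ) ≤ C k j * C k j := fun k => mul_self_nonneg _
    have hs2 : ∀ k, (0:ℝ) ≤ D k j * D k j := fun k => mul_self_nonneg _
    have hsum1 : (0:ℝ) ≤ ∑ k, C k j * C k j := Finset.sum_nonneg fun k _ => hs1 k
    have hsum2 : (0:ℝ) ≤ ∑ k, D k j * D k j := Finset.sum_nonneg fun k _ => hs2 k
    have h0 : (∑ k, C k j * C k j) = 0 := by linarith
    have := (Finset.sum_eq_zero_iff_of_nonneg (fun k _ => hs1 k)).mp h0 i (Finset.mem_univ i)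
    have := mul_self_eq_zero.mp this
    simpa using this
  have : A * P = A := by
    have := hC0
    rw [hCdef, Matrix.mul_sub, Matrix.mul_one, sub_eq_zero] at this
    exact this.symm
  rw [hPdef, ← Matrix.mul_assoc] at this
  rw [← Matrix.mul_assoc]
  exact this
end

section
/- Let g : ℝᵐ → ℝ be convex and α > 0. For any y, u ∈ ℝᵐ, one has prox_{αg*}(u + αy) = u if and only if u is a subgradient of g at y, i.e., g(w) ≥ g(y) + ⟨u, w − y⟩ for all w ∈ ℝᵐ. -/
open Matrix

private lemma dot_self_nonneg' {m : ℕ} (v : Fin m → ℝ) : 0 ≤ v ⬝ᵥ v :=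
  Finset.sum_nonneg fun _ _ => mul_self_nonneg _

private lemma dot_expand' {m : ℕ} (a b : Fin m → ℝ) :
    (a - b) ⬝ᵥ (a - b) = a ⬝ᵥ a - 2 * (a ⬝ᵥ b) + b ⬝ᵥ b := by
  simp [sub_dotProduct, dotProduct_sub, dotProduct_comm a b]; ring

theorem prox_fixed_iff_subgradient
    {m : ℕ}
    (g : (Fin m → ℝ) → ℝ) (hg : ConvexOn ℝ Set.univ g)
    (α : ℝ) (hα : 0 < α)
    (y u : Fin m → ℝ) :
    ProxRel g α (u + α • y) u ↔ ∀ w : Fin m → ℝ, g y + u ⬝ᵥ (w - y) ≤ g w := by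
  have hα0 : α ≠ 0 := hα.ne'
  have hpt : α⁻¹ • ((u + α • y) - u) = y := by
    rw [add_sub_cancel_left, smul_smul, inv_mul_cancel₀ hα0, one_smul]
  have hz : α⁻¹ • (u + α • y) = y + α⁻¹ • u := by
    rw [smul_add, smul_smul, inv_mul_cancel₀ hα0, one_smul, add_comm]
  set c : Fin m → ℝ := α⁻¹ • u with hc
  have key : ∀ x : Fin m → ℝ, (x - (y + c)) ⬝ᵥ (x - (y + c)) =
      (x - y) ⬝ᵥ (x - y) - 2 * α⁻¹ * ((x - y) ⬝ᵥ u) + c ⬝ᵥ c := by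
    intro x
    have h1 : x - (y + c) = (x - y) - c := by abel
    rw [h1, dot_expand', hc, dotProduct_smul]
    simp only [smul_eq_mul]
    ring
  unfold ProxRel
  rw [hpt]
  simp only [hz]
  constructor
  · intro h w
    have hmin := isMinOn_iff.mp h
    set d := w - y with hd
    have hD : 0 ≤ d ⬝ᵥ d := dot_self_nonneg' d
    have main : ∀ t : ℝ, 0 < t → t ≤ 1 →
        g y + u ⬝ᵥ d ≤ g w + t * ((α / 2) * (d ⬝ᵥ d)) := by
      intro t ht0 ht1
      have hx := hmin (y + t • d) (Set.mem_univ _)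
      simp only [key] at hx
      have e1 : (y + t • d) - y = t • d := by abel
      have e2 : (y : Fin m → ℝ) - y = 0 := by abel
      rw [e1, e2] at hx
      have e3 : (t • d) ⬝ᵥ (t • d) = t * t * (d ⬝ᵥ d) := by
        rw [smul_dotProduct, dotProduct_smul]; simp only [smul_eq_mul]; ring
      have e4 : (t • d) ⬝ᵥ u = t * (d ⬝ᵥ u) := by rw [smul_dotProduct]; simp [smul_eq_mul]
      have e5 : (0 : Fin m → ℝ) ⬝ᵥ (0 : Fin m → ℝ) = 0 := by simp
      have e6 : (0 : Fin m → ℝ) ⬝ᵥ u = 0 := by simp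
      rw [e3, e4, e5, e6] at hx
      have hconv := hg.2 (Set.mem_univ y) (Set.mem_univ w)
        (by linarith : (0:ℝ) ≤ 1 - t) ht0.le (by ring)
      have e7 : (1 - t) • y + t • w = y + t • d := by
        rw [hd, smul_sub, sub_smul, one_smul]; abel
      rw [e7] at hconv
      simp only [smul_eq_mul] at hconv
      have hcomm : u ⬝ᵥ d = d ⬝ᵥ u := dotProduct_comm u d
      have hinv : α * α⁻¹ = 1 := mul_inv_cancel₀ hα0
      -- hx : g y + (α/2)*(0 - 2*α⁻¹*0 + c⬝ᵥc) ≤ g (y+t•d) + (α/2)*(t*t*(d⬝ᵥd) - 2*α⁻¹*(t*(d⬝ᵥu)) + c⬝ᵥc)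
      have expand : (α / 2) * (t * t * (d ⬝ᵥ d) - 2 * α⁻¹ * (t * (d ⬝ᵥ u)) + c ⬝ᵥ c)
          = t * (t * ((α / 2) * (d ⬝ᵥ d))) - t * (d ⬝ᵥ u) + (α / 2) * (c ⬝ᵥ c) := by
        field_simp
      rw [expand] at hx
      have hmul : t * (g y + d ⬝ᵥ u) ≤ t * (g w + t * ((α / 2) * (d ⬝ᵥ d))) := by
        nlinarith [hx, hconv]
      have := le_of_mul_le_mul_left hmul ht0
      -- need t*(α/2)*(d⬝ᵥd) ≤ but we keep as is
      linarith [this, hcomm.le, hcomm.ge]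
    refine le_of_forall_pos_le_add fun ε hε => ?_
    set K := (α / 2) * (d ⬝ᵥ d) with hK
    have hK0 : 0 ≤ K := by positivity
    have htpos : 0 < ε / (K + 1) := by positivity
    set t := min 1 (ε / (K + 1)) with ht
    have ht0 : 0 < t := lt_min one_pos htpos
    have h1 := main t ht0 (min_le_left _ _)
    have htK : t * K ≤ ε := by
      calc t * K ≤ (ε / (K + 1)) * K :=
            mul_le_mul_of_nonneg_right (min_le_right _ _) hK0
        _ ≤ ε := by
            rw [div_mul_eq_mul_div, div_le_iff₀ (by linarith)]
            nlinarith
    linarith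
  · intro h
    rw [isMinOn_iff]
    intro x _
    simp only [key]
    have h1 := h x
    have hP : 0 ≤ (x - y) ⬝ᵥ (x - y) := dot_self_nonneg' _
    have e2 : (y : Fin m → ℝ) - y = 0 := by abel
    rw [e2]
    have e5 : (0 : Fin m → ℝ) ⬝ᵥ (0 : Fin m → ℝ) = 0 := by simp
    have e6 : (0 : Fin m → ℝ) ⬝ᵥ u = 0 := by simp
    rw [e5, e6]
    have hcomm : u ⬝ᵥ (x - y) = (x - y) ⬝ᵥ u := dotProduct_comm u _
    have expand : (α / 2) * ((x - y) ⬝ᵥ (x - y) - 2 * α⁻¹ * ((x - y) ⬝ᵥ u) + c ⬝ᵥ c)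
        = (α / 2) * ((x - y) ⬝ᵥ (x - y)) - (x - y) ⬝ᵥ u + (α / 2) * (c ⬝ᵥ c) := by
      field_simp
    rw [expand]
    have e8 : (α / 2) * ((0:ℝ) - 2 * α⁻¹ * 0 + c ⬝ᵥ c) = (α / 2) * (c ⬝ᵥ c) := by ring
    rw [e8]
    have hnn : 0 ≤ (α / 2) * ((x - y) ⬝ᵥ (x - y)) := mul_nonneg (by positivity) hP
    linarith [h1, hnn, hcomm.le, hcomm.ge]
end

section
/- Let (z^k, x^k, λ^k), k ≥ 0, be ADMM iterates for minimizing g(Ax − b): z^{k+1} = argmin_z { g(z) + (α/2)‖z − Ax^k + b + λ^k‖² }, x^{k+1} = (AᵀA)⁺Aᵀ(z^{k+1} + b + λ^k), λ^{k+1} = λ^k + z^{k+1} − Ax^{k+1} + b. Define v^{k} := α(Ax^{k−1} − b − λ^{k−1} − z^{k}) for k ≥ 1. Then for every k ≥ 1: (i) v^{k+1} = prox_{αg*}( v^k + α(A(2x^k − x^{k−1}) − b) ), and (ii) x^{k+1} = x^k − (1/α)(AᵀA)⁺Aᵀ v^{k+1}. In other words, after the first iteration the ADMM iterates follow the recursion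 of the ADMM form of the paper. -/
open Matrix

lemma mpInv_mid {k l : ℕ} (A : Matrix (Fin k) (Fin l) ℝ) :
    mpInv A * A * mpInv A = mpInv A := by
  unfold mpInv
  split
  · next h => exact h.choose_spec.2.1
  · simp

theorem admm_is_paper_form
    {m n : ℕ}
    (A : Matrix (Fin m) (Fin n) ℝ) (b : Fin m → ℝ)
    (α : ℝ) (hα : 0 < α)
    (g : (Fin m → ℝ) → ℝ) (hg : ConvexOn ℝ Set.univ g)
    -- ADMM iterates (z^{k}, x^{k}, λ^{k}):
    (z : ℕ → Fin m → ℝ) (x : ℕ → Fin n → ℝ) (l : ℕ → Fin m → ℝ)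
    -- z^{k+1} = argmin_z { g(z) + (α/2)‖z − Ax^k + b + λ^k‖² }:
    (hz : ∀ k, IsMinOn
      (fun w : Fin m → ℝ => g w +
        (α / 2) * ((w - A *ᵥ x k + b + l k) ⬝ᵥ (w - A *ᵥ x k + b + l k)))
      Set.univ (z (k + 1)))
    -- x^{k+1} = (AᵀA)⁺Aᵀ(z^{k+1} + b + λ^k):
    (hx : ∀ k, x (k + 1) = mpInv (Aᵀ * A) *ᵥ (Aᵀ *ᵥ (z (k + 1) + b + l k)))
    -- λ^{k+1} = λ^k + z^{k+1} − Ax^{k+1} + b: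
    (hl : ∀ k, l (k + 1) = l k + z (k + 1) - A *ᵥ x (k + 1) + b)
    -- v^{k} := α(Ax^{k−1} − b − λ^{k−1} − z^{k}) for k ≥ 1:
    (v : ℕ → Fin m → ℝ)
    (hv : ∀ k, v (k + 1) = α • (A *ᵥ x k - b - l k - z (k + 1))) :
    -- for every k ≥ 1 (written with index k + 1):
    ∀ k : ℕ,
      ProxRel g α (v (k + 1) + α • (A *ᵥ ((2 : ℝ) • x (k + 1) - x k) - b)) (v (k + 2)) ∧
      x (k + 2) = x (k + 1) - α⁻¹ • (mpInv (Aᵀ * A) *ᵥ (Aᵀ *ᵥ v (k + 2))) := by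
  intro k
  have hαne : α ≠ 0 := hα.ne'
  have key : α⁻¹ • (v (k + 1) + α • (A *ᵥ ((2 : ℝ) • x (k + 1) - x k) - b))
      = A *ᵥ x (k + 1) - b - l (k + 1) := by
    rw [hv k, hl k, Matrix.mulVec_sub, Matrix.mulVec_smul]
    match_scalars <;> field_simp <;> ring
  have hpt : α⁻¹ • ((v (k + 1) + α • (A *ᵥ ((2 : ℝ) • x (k + 1) - x k) - b)) - v (k + 2))
      = z (k + 2) := by
    rw [smul_sub, key, hv (k + 1), hl k]
    match_scalars <;> field_simp <;> ring
  constructor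
  · unfold ProxRel
    rw [hpt]
    have hfun : ∀ y : Fin m → ℝ,
        y - α⁻¹ • (v (k + 1) + α • (A *ᵥ ((2 : ℝ) • x (k + 1) - x k) - b))
          = y - A *ᵥ x (k + 1) + b + l (k + 1) := by
      intro y; rw [key]; abel
    simp only [hfun]
    exact hz (k + 1)
  · have hvp : α⁻¹ • v (k + 2) = A *ᵥ x (k + 1) - b - l (k + 1) - z (k + 2) := by
      rw [hv (k + 1)]
      match_scalars <;> field_simp <;> ring
    have hmid : ∀ w : Fin n → ℝ,
        mpInv (Aᵀ * A) *ᵥ ((Aᵀ * A) *ᵥ (mpInv (Aᵀ * A) *ᵥ w)) = mpInv (Aᵀ * A) *ᵥ w := by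
      intro w
      rw [Matrix.mulVec_mulVec, Matrix.mulVec_mulVec, mpInv_mid]
    have hfix : mpInv (Aᵀ * A) *ᵥ (Aᵀ *ᵥ (A *ᵥ x (k + 1))) = x (k + 1) := by
      have h1 : Aᵀ *ᵥ (A *ᵥ x (k + 1)) = (Aᵀ * A) *ᵥ x (k + 1) :=
        Matrix.mulVec_mulVec _ _ _
      rw [h1]
      conv_lhs => rw [hx k]
      rw [hmid, ← hx k]
    rw [hx (k + 1), ← Matrix.mulVec_smul, ← Matrix.mulVec_smul, hvp]
    simp only [Matrix.mulVec_sub, Matrix.mulVec_add]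
    rw [hfix]
    abel
end

section
/- Let b > 0, α > 0, and u ∈ ℝ. The function y ↦ (y − b·log y) + (α/2)(y − u/α)² on (0, ∞) has a unique minimizer y⋆, and it satisfies u − α y⋆ = 1 + ( u − 1 − √((u − 1)² + 4αb) ) / 2. (This is the closed-form expression S(u; αb) for the proximal operator of the scaled conjugate of the Poisson negative log-likelihood ℓ(y; b) = y − b log y used in the PET reconstruction update.) -/
/-!
For `F y = y - b log y + (α/2)(y - u/α)²` on `(0, ∞)`, the stationarity equation
`1 - b/y + α y - u = 0` reads `z (z - (u - 1)) = α b` for `z = α y`, whose positive root is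
`z = (u - 1 + √((u - 1)² + 4αb)) / 2`. The tangent-line bound for `log` at that root gives
`F y ≥ F y⋆ + (α/2)(y - y⋆)²`, which yields both minimality and uniqueness.
-/

open Real

lemma Real.mul_log_sub_log_le {x y : ℝ} (hx : 0 < x) (hy : 0 < y) :
    x * (log y - log x) ≤ y - x := by
  have h := log_le_sub_one_of_pos (div_pos hy hx)
  rw [log_div hy.ne' hx.ne'] at h
  calc x * (log y - log x) ≤ x * (y / x - 1) := mul_le_mul_of_nonneg_left h hx.le
    _ = y - x := by field_simp

lemma add_sqrt_sq_add_pos {t c : ℝ} (hc : 0 < c) : 0 < t + √(t ^ 2 + c) := by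
  have : |t| < √(t ^ 2 + c) := by
    rw [← sqrt_sq_eq_abs]
    exact sqrt_lt_sqrt (sq_nonneg t) (by linarith)
  linarith [neg_abs_le t]

lemma mul_sub_eq_of_eq_add_sqrt {t c z : ℝ} (hc : 0 ≤ c)
    (hz : z = (t + √(t ^ 2 + 4 * c)) / 2) : z * (z - t) = c := by
  have := sq_sqrt (show 0 ≤ t ^ 2 + 4 * c by positivity)
  subst hz
  linear_combination this / 4

lemma isMinOn_and_unique_of_quadratic_growth {E : Type*} [MetricSpace E] {f : E → ℝ}
    {s : Set E} {x : E} {c : ℝ} (hx : x ∈ s) (hc : 0 < c)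
    (hgrowth : ∀ y ∈ s, f x + c * dist y x ^ 2 ≤ f y) :
    IsMinOn f s x ∧ ∀ y ∈ s, IsMinOn f s y → y = x := by
  refine ⟨isMinOn_iff.mpr fun y hy => ?_, fun y hy hmin => ?_⟩
  · have : 0 ≤ c * dist y x ^ 2 := by positivity
    linarith [hgrowth y hy]
  · have hle : c * dist y x ^ 2 ≤ 0 := by linarith [hgrowth y hy, isMinOn_iff.mp hmin x hx]
    have : dist y x ^ 2 = 0 := le_antisymm (nonpos_of_mul_nonpos_right hle hc) (sq_nonneg _)
    simpa using this

noncomputable def poissonProxObjective (b α u y : ℝ) : ℝ :=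
  (y - b * log y) + (α / 2) * (y - u / α) ^ 2

lemma poissonProxObjective_quadratic_growth {b α u x y : ℝ} (hb : 0 ≤ b) (hα : α ≠ 0)
    (hx : 0 < x) (hy : 0 < y) (hstat : x * (α * x - (u - 1)) = b) :
    poissonProxObjective b α u x + (α / 2) * (y - x) ^ 2 ≤ poissonProxObjective b α u y := by
  have hslope : 0 ≤ α * x - (u - 1) := nonneg_of_mul_nonneg_right (hstat ▸ hb) hx
  have htangent : b * (log y - log x) ≤ (α * x - (u - 1)) * (y - x) :=
    calc b * (log y - log x) = (α * x - (u - 1)) * (x * (log y - log x)) := by rw [← hstat]; ring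
      _ ≤ (α * x - (u - 1)) * (y - x) :=
        mul_le_mul_of_nonneg_left (Real.mul_log_sub_log_le hx hy) hslope
  have hquad : (α / 2) * (y - u / α) ^ 2 - (α / 2) * (x - u / α) ^ 2 - (α / 2) * (y - x) ^ 2
      = (α * x - u) * (y - x) := by
    field_simp
    ring
  unfold poissonProxObjective
  linarith

theorem poisson_prox_closed_form
    (b α u : ℝ) (hb : 0 < b) (hα : 0 < α) :
    ∃ ystar : ℝ, ystar ∈ Set.Ioi (0 : ℝ) ∧
      IsMinOn (fun y : ℝ => (y - b * Real.log y) + (α / 2) * (y - u / α) ^ 2)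
        (Set.Ioi (0 : ℝ)) ystar ∧
      (∀ y ∈ Set.Ioi (0 : ℝ),
        IsMinOn (fun y : ℝ => (y - b * Real.log y) + (α / 2) * (y - u / α) ^ 2)
          (Set.Ioi (0 : ℝ)) y → y = ystar) ∧
      u - α * ystar = 1 + (u - 1 - Real.sqrt ((u - 1) ^ 2 + 4 * (α * b))) / 2 := by
  set z := (u - 1 + √((u - 1) ^ 2 + 4 * (α * b))) / 2 with hz
  have hz_pos : 0 < z := half_pos (add_sqrt_sq_add_pos (by positivity))
  have hαz : α * (z / α) = z := mul_div_cancel₀ z hα.ne'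
  have hstat : z / α * (α * (z / α) - (u - 1)) = b := by
    rw [hαz, div_mul_eq_mul_div, mul_sub_eq_of_eq_add_sqrt (by positivity) hz,
      mul_div_cancel_left₀ b hα.ne']
  have hy_pos : z / α ∈ Set.Ioi 0 := div_pos hz_pos hα
  obtain ⟨hmin, hunique⟩ := isMinOn_and_unique_of_quadratic_growth
    (f := poissonProxObjective b α u) hy_pos (half_pos hα) fun y (hy : 0 < y) => by
      rw [Real.dist_eq, sq_abs]
      exact poissonProxObjective_quadratic_growth hb.le hα.ne' hy_pos hy hstat
  refine ⟨z / α, hy_pos, hmin, hunique, ?_⟩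
  rw [hαz, hz]
  ring
end
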